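/- For every integer n ≥ 3 with n ≢ 2 (mod 6) and n ≢ 4 (mod 6), the double Roman bondage number of the cycle C_n satisfies b_dR(C_n) = 2. -/

import Mathlib

/-- A double Roman dominating function (DRDF) on a graph `G`: a function
`f : V → ℕ` taking values in `{0,1,2,3}` such that every vertex assigned `0`
has a neighbor assigned `3` or two distinct neighbors assigned `2`, and every
vertex assigned `1` has a neighbor assigned at least `2`. -/
def IsDRDF {V : Type*} (G : SimpleGraph V) (f : V → ℕ) : Prop :=
  (∀ v, f v ≤ 3) ∧
  (∀ v, f v = 0 →
    (∃ w, G.Adj v w ∧ f w = 3) ∨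
    (∃ w₁ w₂, G.Adj v w₁ ∧ G.Adj v w₂ ∧ w₁ ≠ w₂ ∧ f w₁ = 2 ∧ f w₂ = 2)) ∧
  (∀ v, f v = 1 → ∃ w, G.Adj v w ∧ 2 ≤ f w)

/-- The double Roman domination number `γ_dR(G)`: the minimum weight of a DRDF on `G`. -/
noncomputable def gammaDR {V : Type*} [Fintype V] (G : SimpleGraph V) : ℕ :=
  sInf {k | ∃ f : V → ℕ, IsDRDF G f ∧ ∑ v, f v = k}

/-- The double Roman bondage number `b_dR(G)`: the minimum cardinality of a set
`B` of edges of `G` such that `γ_dR(G - B) > γ_dR(G)`. -/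
noncomputable def bDR {V : Type*} [Fintype V] (G : SimpleGraph V) : ℕ :=
  sInf {k | ∃ B : Finset (Sym2 V), ↑B ⊆ G.edgeSet ∧ B.card = k ∧
    gammaDR G < gammaDR (G.deleteEdges ↑B)}


open Finset SimpleGraph
open Fin.CommRing

def wt : ℕ → ℕ := fun x => if x = 3 then 2 else if x = 2 then 1 else 0

lemma wt_le (x : ℕ) : wt x ≤ 2 := by unfold wt; split_ifs <;> omega
lemma wt_eq_two {x : ℕ} (h : wt x = 2) : x = 3 := by unfold wt at h; split_ifs at h <;> omega
lemma wt_eq_one {x : ℕ} (h : wt x = 1) : x = 2 := by unfold wt at h; split_ifs at h <;> omega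
lemma wt_eq_zero {x : ℕ} (h : wt x = 0) (hx : x ≤ 3) : x = 0 ∨ x = 1 := by
  unfold wt at h; split_ifs at h <;> omega
lemma wt_pos {x : ℕ} (h2 : 2 ≤ x) (h3 : x ≤ 3) : 1 ≤ wt x := by
  unfold wt; split_ifs <;> omega
lemma wt_bound {x : ℕ} (h1 : 1 ≤ x) (h3 : x ≤ 3) : 2 + 2 * wt x ≤ 2 * x := by
  unfold wt; split_ifs <;> omega
lemma wt_three : wt 3 = 2 := rfl
lemma wt_two : wt 2 = 1 := rfl
lemma wt_zero : wt 0 = 0 := rfl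

lemma path_lb (ℓ : ℕ) (hl : 1 ≤ ℓ) (F : ℕ → ℕ)
    (h3 : ∀ j, j < ℓ → F j ≤ 3)
    (h0 : ∀ j, j < ℓ → F j = 0 →
      (j+1 < ℓ ∧ F (j+1) = 3) ∨ (1 ≤ j ∧ F (j-1) = 3) ∨
      (1 ≤ j ∧ j+1 < ℓ ∧ F (j-1) = 2 ∧ F (j+1) = 2))
    (h1 : ∀ j, j < ℓ → F j = 1 →
      (j+1 < ℓ ∧ 2 ≤ F (j+1)) ∨ (1 ≤ j ∧ 2 ≤ F (j-1))) :
    (if 3 ∣ ℓ then ℓ else ℓ + 1) ≤ ∑ j ∈ range ℓ, F j := by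
  obtain ⟨m, rfl⟩ : ∃ m, ℓ = m + 1 := ⟨ℓ - 1, by omega⟩
  set ℓ := m + 1 with hℓdef
  let g : ℕ → ℕ := fun j => (if j + 1 < ℓ then wt (F (j+1)) else 0) +
      (if 1 ≤ j then wt (F (j-1)) else 0)
  have hg : ∀ j, g j = (if j + 1 < ℓ then wt (F (j+1)) else 0) +
      (if 1 ≤ j then wt (F (j-1)) else 0) := fun j => rfl
  -- pointwise inequality
  have hpt : ∀ j ∈ range ℓ, 2 + 2 * wt (F j) ≤ 2 * F j + g j := by
    intro j hj
    rw [mem_range] at hj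
    by_cases hFj : F j = 0
    · have hge : 2 ≤ g j := by
        rw [hg]
        rcases h0 j hj hFj with ⟨h', h3'⟩ | ⟨h', h3'⟩ | ⟨ha, hb, hc, hd⟩
        · rw [if_pos h', h3', wt_three]
          all_goals omega
        · rw [if_pos h', h3', wt_three]
          all_goals omega
        · rw [if_pos hb, if_pos ha, hc, hd, wt_two]
          all_goals omega
      rw [hFj, wt_zero]; omega
    · have := wt_bound (by omega) (h3 j hj)
      omega
  -- sum identities
  have hsum1 : ∑ j ∈ range ℓ, (if j + 1 < ℓ then wt (F (j+1)) else 0) + wt (F 0)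
      = ∑ j ∈ range ℓ, wt (F j) := by
    have e1 : ∑ j ∈ range ℓ, (if j + 1 < ℓ then wt (F (j+1)) else 0)
        = ∑ j ∈ range m, wt (F (j+1)) := by
      rw [hℓdef, Finset.sum_range_succ, if_neg (by omega), add_zero]
      exact Finset.sum_congr rfl fun j hj => by
        rw [mem_range] at hj; rw [if_pos (by omega)]
    rw [e1, hℓdef, Finset.sum_range_succ']
  have hsum2 : ∑ j ∈ range ℓ, (if 1 ≤ j then wt (F (j-1)) else 0) + wt (F m)
      = ∑ j ∈ range ℓ, wt (F j) := by
    have e1 : ∑ j ∈ range ℓ, (if 1 ≤ j then wt (F (j-1)) else 0)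
        = ∑ j ∈ range m, wt (F j) := by
      rw [hℓdef, Finset.sum_range_succ']
      simp
    rw [e1, hℓdef, Finset.sum_range_succ]
  have hgsum : ∑ j ∈ range ℓ, g j + wt (F 0) + wt (F m) = 2 * ∑ j ∈ range ℓ, wt (F j) := by
    simp only [hg]
    rw [Finset.sum_add_distrib]
    omega
  have hmain : 2 * ℓ + wt (F 0) + wt (F m) ≤ 2 * ∑ j ∈ range ℓ, F j := by
    have h1' := Finset.sum_le_sum hpt
    rw [Finset.sum_add_distrib, Finset.sum_add_distrib, ← Finset.mul_sum, ← Finset.mul_sum] at h1'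
    simp only [Finset.sum_const, card_range, smul_eq_mul, mul_one] at h1'
    omega
  have hbase : ℓ ≤ ∑ j ∈ range ℓ, F j := by omega
  split_ifs with hdvd
  · exact hbase
  -- strict part
  by_contra hc
  push_neg at hc
  have heq : ∑ j ∈ range ℓ, F j = ℓ := by omega
  have hW0 : wt (F 0) = 0 := by omega
  have hWm : wt (F m) = 0 := by omega
  have hsums : ∑ j ∈ range ℓ, (2 + 2 * wt (F j)) = ∑ j ∈ range ℓ, (2 * F j + g j) := by
    rw [Finset.sum_add_distrib, Finset.sum_add_distrib, ← Finset.mul_sum, ← Finset.mul_sum]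
    simp only [Finset.sum_const, card_range, smul_eq_mul, mul_one]
    omega
  have hpteq : ∀ j, j < ℓ → 2 + 2 * wt (F j) = 2 * F j + g j := fun j hj =>
    (Finset.sum_eq_sum_iff_of_le hpt).mp hsums j (mem_range.mpr hj)
  -- no ones
  have no1 : ∀ j, j < ℓ → F j ≠ 1 := by
    intro j hj hFj
    have he := hpteq j hj
    rw [hFj] at he
    have hwt1 : wt 1 = 0 := rfl
    rw [hwt1] at he
    have hgj : g j = 0 := by omega
    rw [hg] at hgj
    rcases h1 j hj hFj with ⟨h', h2'⟩ | ⟨h', h2'⟩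
    · have : 1 ≤ wt (F (j+1)) := wt_pos h2' (h3 _ h')
      rw [if_pos h'] at hgj; omega
    · have : 1 ≤ wt (F (j-1)) := wt_pos h2' (h3 _ (by omega))
      rw [if_pos h'] at hgj; omega
  have key0 : ∀ j, j < ℓ → F j = 0 → g j = 2 := by
    intro j hj hFj; have := hpteq j hj; rw [hFj, wt_zero] at this; omega
  have key23 : ∀ j, j < ℓ → 2 ≤ F j → g j = 0 := by
    intro j hj hFj
    have he := hpteq j hj
    have h3' := h3 j hj
    have : F j = 2 ∨ F j = 3 := by omega
    rcases this with h' | h'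
    · rw [h', wt_two] at he; omega
    · rw [h', wt_three] at he; omega
  have hzero : ∀ j, j < ℓ → wt (F j) = 0 → F j = 0 := by
    intro j hj h
    rcases wt_eq_zero h (h3 j hj) with h' | h'
    · exact h'
    · exact absurd h' (no1 j hj)
  have hF0 : F 0 = 0 := hzero 0 (by omega) hW0
  -- propagation, strong induction
  have prop : ∀ j, j < ℓ → (j % 3 = 0 → F j = 0) ∧ (j % 3 = 1 → F j = 3) ∧
      (j % 3 = 2 → F j = 0) := by
    intro j
    induction j using Nat.strong_induction_on with
    | _ j ih =>
    intro hj
    match j, hj with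
    | 0, hj => exact ⟨fun _ => hF0, fun h => by omega, fun h => by omega⟩
    | 1, hj =>
      refine ⟨fun h => by omega, fun _ => ?_, fun h => by omega⟩
      have hk := key0 0 (by omega) hF0
      rw [hg, if_pos (by omega : 0 + 1 < ℓ), if_neg (by omega : ¬ 1 ≤ 0), add_zero] at hk
      exact wt_eq_two hk
    | 2, hj =>
      refine ⟨fun h => by omega, fun h => by omega, fun _ => ?_⟩
      have hF1 : F 1 = 3 := ((ih 1 (by omega) (by omega)).2.1 (by omega))
      have hk := key23 1 (by omega) (by omega)
      rw [hg, if_pos (by omega : 1 + 1 < ℓ), if_pos (le_refl 1)] at hk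
      norm_num at hk
      exact hzero 2 (by omega) (by omega)
    | (j+3), hj =>
      set i := j + 3 with hi
      have ih1 := ih (i-1) (by omega) (by omega)
      have ih2 := ih (i-2) (by omega) (by omega)
      have e1 : i - 1 + 1 = i := by omega
      have e2 : i - 1 - 1 = i - 2 := by omega
      refine ⟨fun h => ?_, fun h => ?_, fun h => ?_⟩
      · -- i % 3 = 0 : F(i-1)=0 (≡2), F(i-2)=3 (≡1)
        have hFm1 : F (i-1) = 0 := ih1.2.2 (by omega)
        have hFm2 : F (i-2) = 3 := ih2.2.1 (by omega)
        have hk := key0 (i-1) (by omega) hFm1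
        rw [hg, if_pos (by omega : i - 1 + 1 < ℓ), if_pos (by omega : 1 ≤ i - 1),
          e1, e2, hFm2, wt_three] at hk
        exact hzero i hj (by omega)
      · -- i % 3 = 1 : F(i-1)=0 (≡0), F(i-2)=0 (≡2)
        have hFm1 : F (i-1) = 0 := ih1.1 (by omega)
        have hFm2 : F (i-2) = 0 := ih2.2.2 (by omega)
        have hk := key0 (i-1) (by omega) hFm1
        rw [hg, if_pos (by omega : i - 1 + 1 < ℓ), if_pos (by omega : 1 ≤ i - 1),
          e1, e2, hFm2, wt_zero, add_zero] at hk
        exact wt_eq_two hk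
      · -- i % 3 = 2 : F(i-1)=3 (≡1)
        have hFm1 : F (i-1) = 3 := ih1.2.1 (by omega)
        have hk := key23 (i-1) (by omega) (by omega)
        rw [hg, if_pos (by omega : i - 1 + 1 < ℓ), if_pos (by omega : 1 ≤ i - 1), e1] at hk
        exact hzero i hj (by omega)
  -- final contradiction
  have hm3 : ℓ % 3 = 1 ∨ ℓ % 3 = 2 := by omega
  rcases hm3 with hm3 | hm3
  · -- last index m has m % 3 = 0
    have hFm : F m = 0 := (prop m (by omega)).1 (by omega)
    have hk := key0 m (by omega) hFm
    rw [hg, if_neg (by omega : ¬ m + 1 < ℓ)] at hk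
    by_cases hm0 : 1 ≤ m
    · have hFm1 : F (m-1) = 0 := (prop (m-1) (by omega)).2.2 (by omega)
      rw [if_pos hm0, hFm1, wt_zero] at hk; omega
    · rw [if_neg hm0] at hk; omega
  · -- last index m has m % 3 = 1, so F m = 3, contradicting wt (F m) = 0
    have hFm : F m = 3 := (prop m (by omega)).2.1 (by omega)
    rw [hFm, wt_three] at hWm
    omega

section Cycle
variable {m : ℕ}

lemma cycle_adj_iff {u v : Fin (m+3)} :
    (cycleGraph (m+3)).Adj u v ↔ v = u + 1 ∨ v = u - 1 := by
  have : (cycleGraph (m+1+2)).Adj u v ↔ u - v = 1 ∨ v - u = 1 := cycleGraph_adj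
  rw [show m+3 = m+1+2 by omega] at *
  rw [this]
  constructor
  · rintro (h | h)
    · right; rw [← h]; ring
    · left; rw [sub_eq_iff_eq_add] at h; rw [h]; ring
  · rintro (h | h)
    · right; rw [h]; ring
    · left; rw [h]; ring

lemma two_ne_zero_fin : (2 : Fin (m+3)) ≠ 0 := by
  have : ((2:ℕ) : Fin (m+3)).val = 2 % (m+3) := Fin.val_natCast 2 (m+3)
  intro h
  rw [show (2 : Fin (m+3)) = ((2:ℕ) : Fin (m+3)) by push_cast; ring] at h
  have := congrArg Fin.val h
  simp [Fin.val_natCast] at this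
  rw [Nat.mod_eq_of_lt (by omega)] at this
  all_goals omega

lemma nbr_ne {v : Fin (m+3)} : v + 1 ≠ v - 1 := by
  intro h
  have : v + 1 - (v - 1) = 0 := by rw [h]; ring
  rw [show v + 1 - (v - 1) = 2 by ring] at this
  exact two_ne_zero_fin this

lemma step_right_fin (v0 : Fin (m+3)) (c d : ℕ) (h : d = c + 1) :
    v0 + ((d : ℕ) : Fin (m+3)) = (v0 + ((c : ℕ) : Fin (m+3))) + 1 := by
  subst h; push_cast; ring

lemma cast_succ_fin (v0 : Fin (m+3)) (c : ℕ) :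
    v0 + ((c+1 : ℕ) : Fin (m+3)) = (v0 + ((c : ℕ) : Fin (m+3))) + 1 := by
  push_cast; ring

lemma cast_succ_fin' (v0 : Fin (m+3)) (c : ℕ) :
    (v0 + ((c+1 : ℕ) : Fin (m+3))) - 1 = v0 + ((c : ℕ) : Fin (m+3)) := by
  rw [cast_succ_fin]; ring

lemma cycle_lb (f : Fin (m+3) → ℕ) (hf : IsDRDF (cycleGraph (m+3)) f)
    (hextra : (m+3) % 2 = 1 ∧ (m+3) % 3 ≠ 0 ∨ True) :
    True := trivial

end Cycle

section Cycle2
variable {m : ℕ}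

lemma cycle_lb_main (f : Fin (m+3) → ℕ) (hf : IsDRDF (cycleGraph (m+3)) f) :
    (m+3) ≤ ∑ v, f v ∧ ((m+3) % 2 = 1 → (m+3) % 3 ≠ 0 → m+4 ≤ ∑ v, f v) := by
  -- neighbor characterization
  have hadj : ∀ v w : Fin (m+3), (cycleGraph (m+3)).Adj v w ↔ w = v + 1 ∨ w = v - 1 :=
    fun v w => cycle_adj_iff
  have hD0 : ∀ v, f v = 0 → (f (v+1) = 3 ∨ f (v-1) = 3) ∨ (f (v+1) = 2 ∧ f (v-1) = 2) := by
    intro v hv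
    rcases hf.2.1 v hv with ⟨w, hw, hw3⟩ | ⟨w₁, w₂, hw1, hw2, hne, hv1, hv2⟩
    · rcases (hadj v w).mp hw with rfl | rfl
      · exact Or.inl (Or.inl hw3)
      · exact Or.inl (Or.inr hw3)
    · rcases (hadj v w₁).mp hw1 with rfl | rfl <;> rcases (hadj v w₂).mp hw2 with rfl | rfl
      · exact absurd rfl hne
      · exact Or.inr ⟨hv1, hv2⟩
      · exact Or.inr ⟨hv2, hv1⟩
      · exact absurd rfl hne
  have hD1 : ∀ v, f v = 1 → 2 ≤ f (v+1) ∨ 2 ≤ f (v-1) := by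
    intro v hv
    obtain ⟨w, hw, hw2⟩ := hf.2.2 v hv
    rcases (hadj v w).mp hw with rfl | rfl
    · exact Or.inl hw2
    · exact Or.inr hw2
  let g : Fin (m+3) → ℕ := fun v => wt (f (v+1)) + wt (f (v-1))
  have hg : ∀ v, g v = wt (f (v+1)) + wt (f (v-1)) := fun v => rfl
  have hpt : ∀ v ∈ univ, 2 + 2 * wt (f v) ≤ 2 * f v + g v := by
    intro v _
    by_cases hFv : f v = 0
    · have hge : 2 ≤ g v := by
        rw [hg]
        rcases hD0 v hFv with (h | h) | ⟨h1, h2⟩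
        · rw [h, wt_three]; omega
        · rw [h, wt_three]; omega
        · rw [h1, h2, wt_two]
          all_goals omega
      rw [hFv, wt_zero]; omega
    · have := wt_bound (by omega) (hf.1 v)
      omega
  have hshift : ∀ h : Fin (m+3) → ℕ, ∑ v : Fin (m+3), h (v + 1) = ∑ v : Fin (m+3), h v := by
    intro h
    exact Fintype.sum_equiv (Equiv.addRight (1 : Fin (m+3))) _ _ (fun v => rfl)
  have hshift' : ∀ h : Fin (m+3) → ℕ, ∑ v : Fin (m+3), h (v - 1) = ∑ v : Fin (m+3), h v := by
    intro h
    exact Fintype.sum_equiv (Equiv.subRight (1 : Fin (m+3))) _ _ (fun v => rfl)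
  have hgsum : ∑ v : Fin (m+3), g v = 2 * ∑ v : Fin (m+3), wt (f v) := by
    simp only [hg]
    rw [Finset.sum_add_distrib, hshift (fun v => wt (f v)), hshift' (fun v => wt (f v))]
    ring
  have hcard : (univ : Finset (Fin (m+3))).card = m+3 := by simp
  have hmain : 2 * (m+3) ≤ 2 * ∑ v, f v := by
    have h1' := Finset.sum_le_sum hpt
    rw [Finset.sum_add_distrib, Finset.sum_add_distrib, ← Finset.mul_sum, ← Finset.mul_sum,
      hgsum] at h1'
    simp only [Finset.sum_const, hcard, smul_eq_mul, mul_one] at h1'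
    omega
  have hbase : (m+3) ≤ ∑ v, f v := by omega
  refine ⟨hbase, ?_⟩
  intro hodd h3n
  by_contra hc
  push_neg at hc
  have heq : ∑ v, f v = m+3 := by omega
  -- pointwise equality
  have hsums : ∑ v : Fin (m+3), (2 + 2 * wt (f v)) = ∑ v : Fin (m+3), (2 * f v + g v) := by
    rw [Finset.sum_add_distrib, Finset.sum_add_distrib, ← Finset.mul_sum, ← Finset.mul_sum,
      hgsum]
    simp only [Finset.sum_const, hcard, smul_eq_mul, mul_one]
    omega
  have hpteq : ∀ v : Fin (m+3), 2 + 2 * wt (f v) = 2 * f v + g v := fun v =>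
    (Finset.sum_eq_sum_iff_of_le hpt).mp hsums v (mem_univ v)
  have no1 : ∀ v, f v ≠ 1 := by
    intro v hv
    have he := hpteq v
    rw [hv, show wt 1 = 0 from rfl] at he
    have hgv : g v = 0 := by omega
    rw [hg] at hgv
    rcases hD1 v hv with h | h
    · have : 1 ≤ wt (f (v+1)) := wt_pos h (hf.1 _); omega
    · have : 1 ≤ wt (f (v-1)) := wt_pos h (hf.1 _); omega
  have key0 : ∀ v, f v = 0 → wt (f (v+1)) + wt (f (v-1)) = 2 := by
    intro v hv; have := hpteq v; rw [hv, wt_zero] at this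
    rw [hg] at this; omega
  have key23 : ∀ v, 2 ≤ f v → wt (f (v+1)) = 0 ∧ wt (f (v-1)) = 0 := by
    intro v hv
    have he := hpteq v
    rw [hg] at he
    have h3' := hf.1 v
    have : f v = 2 ∨ f v = 3 := by omega
    rcases this with h' | h'
    · rw [h', wt_two] at he; omega
    · rw [h', wt_three] at he; omega
  have hzero : ∀ v, wt (f v) = 0 → f v = 0 := by
    intro v h
    rcases wt_eq_zero h (hf.1 v) with h' | h'
    · exact h'
    · exact absurd h' (no1 v)
  -- there is a vertex with value ≥ 2
  have hex : ∃ v0, 2 ≤ f v0 := by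
    by_contra hall
    push_neg at hall
    have hall0 : ∀ v, f v = 0 := by
      intro v; have := hall v; have := no1 v; omega
    have := key0 0 (hall0 0)
    rw [hall0 (0+1), hall0 (0-1), wt_zero] at this
    omega
  obtain ⟨v0, hv0⟩ := hex
  have hv03 : f v0 = 2 ∨ f v0 = 3 := by have := hf.1 v0; omega
  have step_right : ∀ (v0 : Fin (m+3)) (c d : ℕ), d = c + 1 →
      v0 + ((d : ℕ) : Fin (m+3)) = (v0 + ((c : ℕ) : Fin (m+3))) + 1 := by
    intro v0 c d h; subst h; push_cast; ring
  have step_left : ∀ (v0 : Fin (m+3)) (c d : ℕ), d = c + 1 →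
      (v0 + ((d : ℕ) : Fin (m+3))) - 1 = v0 + ((c : ℕ) : Fin (m+3)) := by
    intro v0 c d h; rw [step_right v0 c d h]; ring
  rcases hv03 with hv02 | hv03
  · -- pattern 2,0 repeating; contradiction with (m+3) odd
    have prop2 : ∀ k : ℕ, f (v0 + ((2*k : ℕ) : Fin (m+3))) = 2 ∧
        f (v0 + ((2*k+1 : ℕ) : Fin (m+3))) = 0 := by
      intro k
      induction k with
      | zero =>
        constructor
        · simpa using hv02
        · have h1 := (key23 v0 (by omega)).1
          have h2 : f (v0 + 1) = 0 := hzero _ h1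
          have e1 : v0 + ((2*0+1 : ℕ) : Fin (m+3)) = v0 + 1 := by push_cast; ring
          rw [e1]; exact h2
      | succ k ih =>
        obtain ⟨ih2, ih0⟩ := ih
        have hk := key0 _ ih0
        rw [← step_right v0 (2*k+1) (2*k+2) (by omega),
          step_left v0 (2*k) (2*k+1) (by omega), ih2, wt_two] at hk
        have h2' : f (v0 + ((2*k+2 : ℕ) : Fin (m+3))) = 2 := wt_eq_one (by omega)
        have h1' := (key23 _ (by omega : 2 ≤ f (v0 + ((2*k+2 : ℕ) : Fin (m+3))))).1
        rw [← step_right v0 (2*k+2) (2*k+3) (by omega)] at h1'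
        have h0' : f (v0 + ((2*k+3 : ℕ) : Fin (m+3))) = 0 := hzero _ h1'
        constructor
        · rw [show (2*(k+1) : ℕ) = 2*k+2 by omega]; exact h2'
        · rw [show (2*(k+1)+1 : ℕ) = 2*k+3 by omega]; exact h0'
    have hcop : Nat.Coprime 2 (m+3) := by
      rw [Nat.prime_two.coprime_iff_not_dvd]
      omega
    obtain ⟨k1, -, hk1⟩ := Nat.exists_mul_mod_eq_one_of_coprime hcop (by omega)
    have hcast : ((2*k1 : ℕ) : Fin (m+3)) = ((2*0+1 : ℕ) : Fin (m+3)) := by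
      apply Fin.ext
      rw [Fin.val_natCast, Fin.val_natCast,
        Nat.mod_eq_of_lt (show 2*0+1 < m+3 by omega), hk1]
    have ha := (prop2 k1).1
    rw [hcast] at ha
    have hb := (prop2 0).2
    omega
  · -- pattern 3,0,0 repeating; contradiction with (m+3) % 3 ≠ 0
    have prop3 : ∀ k : ℕ, f (v0 + ((3*k : ℕ) : Fin (m+3))) = 3 ∧
        f (v0 + ((3*k+1 : ℕ) : Fin (m+3))) = 0 ∧
        f (v0 + ((3*k+2 : ℕ) : Fin (m+3))) = 0 := by
      intro k
      induction k with
      | zero =>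
        have b1 : f (v0 + ((3*0+1 : ℕ) : Fin (m+3))) = 0 := by
          have h1 := (key23 v0 (by omega)).1
          have h2 : f (v0 + 1) = 0 := hzero _ h1
          have e1 : v0 + ((3*0+1 : ℕ) : Fin (m+3)) = v0 + 1 := by push_cast; ring
          rw [e1]; exact h2
        refine ⟨by simpa using hv03, b1, ?_⟩
        have hk := key0 _ b1
        rw [← step_right v0 (3*0+1) (3*0+2) (by omega)] at hk
        have e0 : (v0 + ((3*0+1 : ℕ) : Fin (m+3))) - 1 = v0 := by
          have e1 : v0 + ((3*0+1 : ℕ) : Fin (m+3)) = v0 + 1 := by push_cast; ring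
          rw [e1]; ring
        rw [e0, hv03, wt_three] at hk
        exact hzero _ (by omega)
      | succ k ih =>
        obtain ⟨ih3, ih1, ih2⟩ := ih
        have hk := key0 _ ih2
        rw [← step_right v0 (3*k+2) (3*k+3) (by omega),
          step_left v0 (3*k+1) (3*k+2) (by omega), ih1, wt_zero, add_zero] at hk
        have h3' : f (v0 + ((3*k+3 : ℕ) : Fin (m+3))) = 3 := wt_eq_two hk
        have h1' := (key23 _ (by omega : 2 ≤ f (v0 + ((3*k+3 : ℕ) : Fin (m+3))))).1
        rw [← step_right v0 (3*k+3) (3*k+4) (by omega)] at h1'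
        have h4' : f (v0 + ((3*k+4 : ℕ) : Fin (m+3))) = 0 := hzero _ h1'
        have hk5 := key0 _ h4'
        rw [← step_right v0 (3*k+4) (3*k+5) (by omega),
          step_left v0 (3*k+3) (3*k+4) (by omega), h3', wt_three] at hk5
        have h5' : f (v0 + ((3*k+5 : ℕ) : Fin (m+3))) = 0 := hzero _ (by omega)
        refine ⟨?_, ?_, ?_⟩
        · rw [show (3*(k+1) : ℕ) = 3*k+3 by omega]; exact h3'
        · rw [show (3*(k+1)+1 : ℕ) = 3*k+4 by omega]; exact h4'
        · rw [show (3*(k+1)+2 : ℕ) = 3*k+5 by omega]; exact h5'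
    have hcop : Nat.Coprime 3 (m+3) := by
      rw [Nat.prime_three.coprime_iff_not_dvd]
      omega
    obtain ⟨k1, -, hk1⟩ := Nat.exists_mul_mod_eq_one_of_coprime hcop (by omega)
    have hcast : ((3*k1 : ℕ) : Fin (m+3)) = ((3*0+1 : ℕ) : Fin (m+3)) := by
      apply Fin.ext
      rw [Fin.val_natCast, Fin.val_natCast,
        Nat.mod_eq_of_lt (show 3*0+1 < m+3 by omega), hk1]
    have ha := (prop3 k1).1
    rw [hcast] at ha
    have hb := (prop3 0).2.1
    omega

end Cycle2

section Construction
variable {m : ℕ}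

def pat (n j : ℕ) : ℕ :=
  if j = n - 1 then (if n % 3 = 0 then 0 else n % 3 + 1)
  else if j % 3 = 1 then 3 else 0

lemma pat_le (n j : ℕ) : pat n j ≤ 3 := by unfold pat; split_ifs <;> omega

lemma pat_ne_one (n j : ℕ) : pat n j ≠ 1 := by unfold pat; split_ifs <;> omega

lemma pat_of_mod1 {n j : ℕ} (h : j % 3 = 1) (hn : 3 ≤ n) (hj : j < n) : pat n j = 3 := by
  unfold pat
  split_ifs <;> omega

lemma pat_zero_cases {n j : ℕ} (h : pat n j = 0) (hn : 3 ≤ n) (hj : j < n) :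
    (j % 3 = 0 ∧ j ≠ n - 1) ∨ j % 3 = 2 := by
  unfold pat at h
  split_ifs at h <;> omega

lemma base_sum : ∀ t : ℕ,
    (∑ j ∈ Finset.range (3*t), (if j % 3 = 1 then 3 else 0)) = 3*t ∧
    (∑ j ∈ Finset.range (3*t+1), (if j % 3 = 1 then 3 else 0)) = 3*t ∧
    (∑ j ∈ Finset.range (3*t+2), (if j % 3 = 1 then 3 else 0)) = 3*t+3 := by
  intro t
  induction t with
  | zero =>
    norm_num [Finset.sum_range_succ]
  | succ t ih =>
    obtain ⟨i0, i1, i2⟩ := ih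
    have e0 : 3*(t+1) = (3*t+2)+1 := by omega
    have e1 : 3*(t+1)+1 = (3*(t+1))+1 := rfl
    have e2 : 3*(t+1)+2 = (3*(t+1)+1)+1 := rfl
    have s0 : (∑ j ∈ Finset.range (3*(t+1)), (if j % 3 = 1 then 3 else 0)) = 3*(t+1) := by
      rw [e0, Finset.sum_range_succ, i2, if_neg (by omega)]
      all_goals omega
    have s1 : (∑ j ∈ Finset.range (3*(t+1)+1), (if j % 3 = 1 then 3 else 0)) = 3*(t+1) := by
      rw [Finset.sum_range_succ, s0, if_neg (by omega)]
      all_goals omega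
    have s2 : (∑ j ∈ Finset.range (3*(t+1)+2), (if j % 3 = 1 then 3 else 0)) = 3*(t+1)+3 := by
      rw [show 3*(t+1)+2 = (3*(t+1)+1)+1 by omega, Finset.sum_range_succ, s1, if_pos (by omega)]
      all_goals omega
    exact ⟨s0, s1, s2⟩

lemma pat_sum {n : ℕ} (hn : 3 ≤ n) :
    ∑ j ∈ Finset.range n, pat n j = (if n % 3 = 0 then n else n + 1) := by
  obtain ⟨b, rfl⟩ : ∃ b, n = b + 1 := ⟨n - 1, by omega⟩
  rw [Finset.sum_range_succ]
  have hb : ∀ j ∈ Finset.range b, pat (b+1) j = (if j % 3 = 1 then 3 else 0) := by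
    intro j hj
    rw [Finset.mem_range] at hj
    unfold pat
    rw [if_neg (by omega)]
  rw [Finset.sum_congr rfl hb]
  have hlast : pat (b+1) b = (if (b+1) % 3 = 0 then 0 else (b+1) % 3 + 1) := by
    unfold pat
    rw [if_pos (by omega)]
  rw [hlast]
  rcases (show (b+1) % 3 = 0 ∨ (b+1) % 3 = 1 ∨ (b+1) % 3 = 2 by omega) with h | h | h
  · -- b = 3t+2
    obtain ⟨t, rfl⟩ : ∃ t, b = 3*t+2 := ⟨(b-2)/3, by omega⟩
    rw [(base_sum t).2.2, if_pos h, if_pos h]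
    all_goals omega
  · obtain ⟨t, rfl⟩ : ∃ t, b = 3*t := ⟨b/3, by omega⟩
    rw [(base_sum t).1, if_neg (by omega), if_neg (by omega)]
    all_goals omega
  · obtain ⟨t, rfl⟩ : ∃ t, b = 3*t+1 := ⟨(b-1)/3, by omega⟩
    rw [(base_sum t).2.1, if_neg (by omega), if_neg (by omega)]
    all_goals omega

end Construction

section Construction2
variable {m : ℕ}

lemma natCast_eq_iff_fin {a b : ℕ} (ha : a < m+3) (hb : b < m+3) :
    ((a : ℕ) : Fin (m+3)) = ((b : ℕ) : Fin (m+3)) ↔ a = b := by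
  constructor
  · intro h
    have := congrArg Fin.val h
    rw [Fin.val_natCast, Fin.val_natCast, Nat.mod_eq_of_lt ha, Nat.mod_eq_of_lt hb] at this
    exact this
  · intro h; rw [h]

lemma pos_val (u : Fin (m+3)) (k : ℕ) (hk : k < m+3) :
    ((u + ((k : ℕ) : Fin (m+3))) - u).val = k := by
  rw [add_sub_cancel_left, Fin.val_natCast, Nat.mod_eq_of_lt hk]

lemma construction (i : Fin (m+3)) :
    ∃ f : Fin (m+3) → ℕ,
      IsDRDF ((SimpleGraph.cycleGraph (m+3)).deleteEdges {s(i, i+1)}) f ∧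
      ∑ v, f v = (if (m+3) % 3 = 0 then m+3 else m+4) := by
  set u : Fin (m+3) := i + 1 with hu
  set H := (SimpleGraph.cycleGraph (m+3)).deleteEdges {s(i, i+1)} with hH
  refine ⟨fun v => pat (m+3) ((v - u).val), ?_, ?_⟩
  · -- adjacency of consecutive positions in H
    have adjH : ∀ j : ℕ, j + 1 < m+3 →
        H.Adj (u + ((j : ℕ) : Fin (m+3))) (u + ((j+1 : ℕ) : Fin (m+3))) := by
      intro j hj
      rw [hH, SimpleGraph.deleteEdges_adj]
      constructor
      · rw [cycle_adj_iff]
        left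
        rw [step_right_fin u j (j+1) rfl]
      · rw [Set.mem_singleton_iff, Sym2.eq_iff]
        rintro (⟨h1, h2⟩ | ⟨h1, h2⟩)
        · -- u + j = i = u - 1, so (j+1 : Fin) = 0
          have hz : ((j+1 : ℕ) : Fin (m+3)) = 0 := by
            have h3 : u + ((j : ℕ) : Fin (m+3)) + 1 = i + 1 := by rw [h1]
            rw [← step_right_fin u j (j+1) rfl, ← hu] at h3
            exact add_eq_left.mp h3
          rw [Fin.natCast_eq_zero] at hz
          have := Nat.le_of_dvd (by omega) hz
          omega
        · -- u + j = i + 1 = u and u + (j+1) = i: then 2 = 0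
          have hj0 : ((j : ℕ) : Fin (m+3)) = 0 := by
            rw [← hu] at h1
            exact add_eq_left.mp h1
          have h4 : u + ((j+1 : ℕ) : Fin (m+3)) = u - 1 := by
            rw [h2, hu]; ring
          rw [step_right_fin u j (j+1) rfl, hj0, add_zero] at h4
          -- h4 : u + 1 = u - 1
          have h5 : (2 : Fin (m+3)) = 0 := by
            have h6 : (u + 1) - (u - 1) = 0 := by rw [h4]; ring
            rw [show (u + 1) - (u - 1) = 2 by ring] at h6
            exact h6
          exact two_ne_zero_fin h5
    have adjL : ∀ j : ℕ, 1 ≤ j → j < m+3 →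
        H.Adj (u + ((j : ℕ) : Fin (m+3))) (u + ((j-1 : ℕ) : Fin (m+3))) := by
      intro j h1 h2
      have := (adjH (j-1) (by omega)).symm
      rw [show j - 1 + 1 = j by omega] at this
      exact this
    have fval : ∀ k : ℕ, k < m+3 →
        pat (m+3) (((u + ((k : ℕ) : Fin (m+3))) - u).val) = pat (m+3) k := by
      intro k hk; rw [pos_val u k hk]
    refine ⟨fun v => pat_le _ _, ?_, ?_⟩
    · intro v hv
      set j := (v - u).val with hj
      have hjlt : j < m+3 := (v - u).isLt
      have hveq : v = u + ((j : ℕ) : Fin (m+3)) := by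
        rw [hj, Fin.cast_val_eq_self]; ring
      rcases pat_zero_cases hv (by omega) hjlt with ⟨hm0, hne⟩ | hm2
      · left
        refine ⟨u + ((j+1 : ℕ) : Fin (m+3)), ?_, ?_⟩
        · rw [hveq]; exact adjH j (by omega)
        · show pat (m+3) (((u + ((j+1 : ℕ) : Fin (m+3))) - u).val) = 3
          rw [fval (j+1) (by omega)]
          exact pat_of_mod1 (by omega) (by omega) (by omega)
      · left
        refine ⟨u + ((j-1 : ℕ) : Fin (m+3)), ?_, ?_⟩
        · rw [hveq]; exact adjL j (by omega) hjlt
        · show pat (m+3) (((u + ((j-1 : ℕ) : Fin (m+3))) - u).val) = 3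
          rw [fval (j-1) (by omega)]
          exact pat_of_mod1 (by omega) (by omega) (by omega)
    · intro v hv
      exact absurd hv (pat_ne_one _ _)
  · have h1 : ∑ v : Fin (m+3), pat (m+3) ((v - u).val)
        = ∑ v : Fin (m+3), pat (m+3) v.val :=
      Fintype.sum_equiv (Equiv.subRight u) _ _ (fun v => rfl)
    rw [h1, Fin.sum_univ_eq_sum_range (fun j => pat (m+3) j) (m+3), pat_sum (by omega)]
    all_goals (split_ifs <;> omega)

end Construction2


section Helpers
variable {m : ℕ}

lemma natCast_succ_fin (c : ℕ) : ((c+1 : ℕ) : Fin (m+3)) = ((c : ℕ) : Fin (m+3)) + 1 := by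
  push_cast; ring

example : ((2:ℕ) : Fin (m+3)) = (2 : Fin (m+3)) := by push_cast; ring

lemma sum_range_split (a b : ℕ) (h : ℕ → ℕ) :
    ∑ j ∈ Finset.range (a+b), h j
      = ∑ j ∈ Finset.range a, h j + ∑ j ∈ Finset.range b, h (a + j) := by
  induction b with
  | zero => simp
  | succ b ih =>
    rw [show a + (b+1) = (a+b)+1 by omega, Finset.sum_range_succ, ih, Finset.sum_range_succ]
    omega

lemma rotate_sum (f : Fin (m+3) → ℕ) :
    ∑ j ∈ Finset.range (m+3), f ((1 + j : ℕ) : Fin (m+3)) = ∑ v, f v := by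
  have h1 : ∀ j ∈ Finset.range (m+3), f ((1 + j : ℕ) : Fin (m+3))
      = f ((1 : Fin (m+3)) + ((j : ℕ) : Fin (m+3))) := by
    intro j _
    congr 1
    push_cast
    ring
  rw [Finset.sum_congr rfl h1]
  have h2 : ∑ j ∈ Finset.range (m+3), f ((1 : Fin (m+3)) + ((j : ℕ) : Fin (m+3)))
      = ∑ v : Fin (m+3), f (1 + v) := by
    rw [← Fin.sum_univ_eq_sum_range (fun j => f ((1 : Fin (m+3)) + ((j : ℕ) : Fin (m+3)))) (m+3)]
    exact Finset.sum_congr rfl fun v _ => by rw [Fin.cast_val_eq_self]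
  rw [h2]
  exact Fintype.sum_equiv (Equiv.addLeft (1 : Fin (m+3))) _ _ (fun v => rfl)

lemma split_sum (f : Fin (m+3) → ℕ) (l1 l2 : ℕ) (h : l1 + l2 = m + 3) :
    ∑ v, f v = ∑ j ∈ Finset.range l1, f ((1 + j : ℕ) : Fin (m+3))
      + ∑ j ∈ Finset.range l2, f (((1 + l1) + j : ℕ) : Fin (m+3)) := by
  have key := sum_range_split l1 l2 (fun j => f ((1 + j : ℕ) : Fin (m+3)))
  rw [h] at key
  rw [← rotate_sum f, key]
  congr 1
  exact Finset.sum_congr rfl fun j _ => by rw [show 1 + (l1 + j) = (1 + l1) + j by omega]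

end Helpers

section ArcNbr
variable {m : ℕ}

lemma arc_nbr (B : Finset (Sym2 (Fin (m+3)))) (a l : ℕ) (ha : 1 ≤ a) (hl : 1 ≤ l)
    (hleft : s((((a-1) : ℕ) : Fin (m+3)), ((a : ℕ) : Fin (m+3)))
      ∈ (↑B : Set (Sym2 (Fin (m+3)))))
    (hright : s((((a+l-1) : ℕ) : Fin (m+3)), (((a+l) : ℕ) : Fin (m+3)))
      ∈ (↑B : Set (Sym2 (Fin (m+3))))) :
    ∀ j, j < l → ∀ u, ((SimpleGraph.cycleGraph (m+3)).deleteEdges ↑B).Adj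
        ((a+j : ℕ) : Fin (m+3)) u →
      (j + 1 < l ∧ u = ((a+(j+1) : ℕ) : Fin (m+3))) ∨
      (1 ≤ j ∧ u = ((a+(j-1) : ℕ) : Fin (m+3))) := by
  intro j hj u hadj
  rw [SimpleGraph.deleteEdges_adj] at hadj
  obtain ⟨hcyc, hmem⟩ := hadj
  rw [cycle_adj_iff] at hcyc
  rcases hcyc with rfl | rfl
  · -- u = v + 1
    by_cases hlt : j + 1 < l
    · left
      refine ⟨hlt, ?_⟩
      rw [show a + (j+1) = (a+j) + 1 by omega, natCast_succ_fin]
    · exfalso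
      apply hmem
      have hj1 : a + j = a + l - 1 := by omega
      have h2 : ((a+j : ℕ) : Fin (m+3)) + 1 = ((a+l : ℕ) : Fin (m+3)) := by
        rw [show a + l = (a+j) + 1 by omega, natCast_succ_fin]
      rw [h2, hj1]
      exact hright
  · -- u = v - 1
    by_cases h1 : 1 ≤ j
    · right
      refine ⟨h1, ?_⟩
      have h2 : ((a+j : ℕ) : Fin (m+3)) = ((a+(j-1) : ℕ) : Fin (m+3)) + 1 := by
        rw [show a + j = (a+(j-1)) + 1 by omega, natCast_succ_fin]
      rw [h2, add_sub_cancel_right]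
    · exfalso
      apply hmem
      have hj0 : j = 0 := by omega
      have h2 : ((a+j : ℕ) : Fin (m+3)) - 1 = (((a-1) : ℕ) : Fin (m+3)) := by
        rw [show a + j = (a-1) + 1 by omega, natCast_succ_fin, add_sub_cancel_right]
      rw [h2, Sym2.eq_swap]
      have h3 : ((a+j : ℕ) : Fin (m+3)) = ((a : ℕ) : Fin (m+3)) := by
        rw [hj0, add_zero]
      rw [h3]
      exact hleft

end ArcNbr

lemma arc_lb {n : ℕ} [NeZero n] (H : SimpleGraph (Fin n)) (f : Fin n → ℕ)
    (hf : IsDRDF H f) (a : ℕ) (ℓ : ℕ) (hl : 1 ≤ ℓ)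
    (hnb : ∀ j, j < ℓ → ∀ u, H.Adj ((a + j : ℕ) : Fin n) u →
      (j + 1 < ℓ ∧ u = ((a + (j+1) : ℕ) : Fin n)) ∨ (1 ≤ j ∧ u = ((a + (j-1) : ℕ) : Fin n))) :
    (if 3 ∣ ℓ then ℓ else ℓ + 1) ≤ ∑ j ∈ Finset.range ℓ, f ((a + j : ℕ) : Fin n) := by
  apply path_lb ℓ hl (fun j => f ((a + j : ℕ) : Fin n))
  · intro j _; exact hf.1 _
  · intro j hj hFj
    rcases hf.2.1 _ hFj with ⟨w, hw, hw3⟩ | ⟨w₁, w₂, hw1, hw2, hne, hv1, hv2⟩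
    · rcases hnb j hj w hw with ⟨hlt, rfl⟩ | ⟨hle, rfl⟩
      · exact Or.inl ⟨hlt, hw3⟩
      · exact Or.inr (Or.inl ⟨hle, hw3⟩)
    · rcases hnb j hj w₁ hw1 with ⟨hlt1, rfl⟩ | ⟨hle1, rfl⟩ <;>
        rcases hnb j hj w₂ hw2 with ⟨hlt2, rfl⟩ | ⟨hle2, rfl⟩
      · exact absurd rfl hne
      · exact Or.inr (Or.inr ⟨hle2, hlt1, hv2, hv1⟩)
      · exact Or.inr (Or.inr ⟨hle1, hlt2, hv1, hv2⟩)
      · exact absurd rfl hne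
  · intro j hj hFj
    obtain ⟨w, hw, hw2⟩ := hf.2.2 _ hFj
    rcases hnb j hj w hw with ⟨hlt, rfl⟩ | ⟨hle, rfl⟩
    · exact Or.inl ⟨hlt, hw2⟩
    · exact Or.inr ⟨hle, hw2⟩

section Gamma

lemma drdf_mono {V : Type*} {G H : SimpleGraph V} (hle : H ≤ G) {f : V → ℕ}
    (hf : IsDRDF H f) : IsDRDF G f := by
  obtain ⟨h3, h0, h1⟩ := hf
  refine ⟨h3, ?_, ?_⟩
  · intro v hv
    rcases h0 v hv with ⟨w, hw, h⟩ | ⟨w1, w2, hw1, hw2, hne, ha, hb⟩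
    · exact Or.inl ⟨w, hle hw, h⟩
    · exact Or.inr ⟨w1, w2, hle hw1, hle hw2, hne, ha, hb⟩
  · intro v hv
    obtain ⟨w, hw, h⟩ := h1 v hv
    exact ⟨w, hle hw, h⟩

lemma drdf_const2 {V : Type*} (G : SimpleGraph V) : IsDRDF G (fun _ => 2) :=
  ⟨fun _ => by norm_num, fun v h => by norm_num at h, fun v h => by norm_num at h⟩

lemma gammaDR_le {V : Type*} [Fintype V] (G : SimpleGraph V) {f : V → ℕ}
    (hf : IsDRDF G f) : gammaDR G ≤ ∑ v, f v :=
  Nat.sInf_le ⟨f, hf, rfl⟩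

lemma gammaDR_ge {V : Type*} [Fintype V] (G : SimpleGraph V) {c : ℕ}
    (h : ∀ f, IsDRDF G f → c ≤ ∑ v, f v) : c ≤ gammaDR G := by
  apply le_csInf
  · exact ⟨∑ v : V, (fun _ => (2:ℕ)) v, ⟨fun _ => 2, drdf_const2 G, rfl⟩⟩
  · rintro k ⟨f, hf, rfl⟩
    exact h f hf

end Gamma

section TwoEdges
variable {m : ℕ}

lemma two_edges :
    ∃ B : Finset (Sym2 (Fin (m+3))), ↑B ⊆ (SimpleGraph.cycleGraph (m+3)).edgeSet ∧
      B.card = 2 ∧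
      m + 5 ≤ gammaDR ((SimpleGraph.cycleGraph (m+3)).deleteEdges ↑B) := by
  have hwrap1 : ((m+3 : ℕ) : Fin (m+3)) = ((0 : ℕ) : Fin (m+3)) := by
    rw [Fin.natCast_self, Nat.cast_zero]
  have hwrap2 : ((m+4 : ℕ) : Fin (m+3)) = ((1 : ℕ) : Fin (m+3)) := by
    rw [show (m+4 : ℕ) = (m+3)+1 from rfl, natCast_succ_fin, Fin.natCast_self, zero_add,
      Nat.cast_one]
  have hne01 : ((0 : ℕ) : Fin (m+3)) ≠ ((1 : ℕ) : Fin (m+3)) := by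
    rw [Ne, natCast_eq_iff_fin (by omega) (by omega)]; omega
  have hne02 : ((0 : ℕ) : Fin (m+3)) ≠ ((2 : ℕ) : Fin (m+3)) := by
    rw [Ne, natCast_eq_iff_fin (by omega) (by omega)]; omega
  have hne12 : ((1 : ℕ) : Fin (m+3)) ≠ ((2 : ℕ) : Fin (m+3)) := by
    rw [Ne, natCast_eq_iff_fin (by omega) (by omega)]; omega
  have hadj01 : (SimpleGraph.cycleGraph (m+3)).Adj ((0 : ℕ) : Fin (m+3)) ((1 : ℕ) : Fin (m+3)) := by
    rw [cycle_adj_iff]; left; exact natCast_succ_fin 0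
  have hadj12 : (SimpleGraph.cycleGraph (m+3)).Adj ((1 : ℕ) : Fin (m+3)) ((2 : ℕ) : Fin (m+3)) := by
    rw [cycle_adj_iff]; left; exact natCast_succ_fin 1
  have hadj23 : (SimpleGraph.cycleGraph (m+3)).Adj ((2 : ℕ) : Fin (m+3)) ((3 : ℕ) : Fin (m+3)) := by
    rw [cycle_adj_iff]; left; exact natCast_succ_fin 2
  by_cases h32 : (m+3) % 3 = 2
  · -- isolate vertex 1
    refine ⟨{s(((0:ℕ) : Fin (m+3)), ((1:ℕ) : Fin (m+3))),
             s(((1:ℕ) : Fin (m+3)), ((2:ℕ) : Fin (m+3)))}, ?_, ?_, ?_⟩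
    · intro e he
      simp only [Finset.coe_insert, Finset.coe_singleton, Set.mem_insert_iff,
        Set.mem_singleton_iff] at he
      rcases he with rfl | rfl
      · exact hadj01
      · exact hadj12
    · rw [Finset.card_insert_of_notMem, Finset.card_singleton]
      rw [Finset.mem_singleton, Sym2.eq_iff]
      rintro (⟨h1, h2⟩ | ⟨h1, h2⟩)
      · exact hne01 h1
      · exact hne02 h1
    · apply gammaDR_ge
      intro f hf
      have hmem1 : s(((1-1 : ℕ) : Fin (m+3)), ((1 : ℕ) : Fin (m+3))) ∈
          (↑({s(((0:ℕ) : Fin (m+3)), ((1:ℕ) : Fin (m+3))),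
             s(((1:ℕ) : Fin (m+3)), ((2:ℕ) : Fin (m+3)))} : Finset (Sym2 (Fin (m+3)))) :
            Set (Sym2 (Fin (m+3)))) := by
        simp only [Finset.coe_insert, Finset.coe_singleton, Set.mem_insert_iff,
          Set.mem_singleton_iff]
        tauto
      have hmem2 : s(((1+1-1 : ℕ) : Fin (m+3)), ((1+1 : ℕ) : Fin (m+3))) ∈
          (↑({s(((0:ℕ) : Fin (m+3)), ((1:ℕ) : Fin (m+3))),
             s(((1:ℕ) : Fin (m+3)), ((2:ℕ) : Fin (m+3)))} : Finset (Sym2 (Fin (m+3)))) :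
            Set (Sym2 (Fin (m+3)))) := by
        simp only [Finset.coe_insert, Finset.coe_singleton, Set.mem_insert_iff,
          Set.mem_singleton_iff]
        tauto
      have hmem3 : s(((2-1 : ℕ) : Fin (m+3)), ((2 : ℕ) : Fin (m+3))) ∈
          (↑({s(((0:ℕ) : Fin (m+3)), ((1:ℕ) : Fin (m+3))),
             s(((1:ℕ) : Fin (m+3)), ((2:ℕ) : Fin (m+3)))} : Finset (Sym2 (Fin (m+3)))) :
            Set (Sym2 (Fin (m+3)))) := by
        simp only [Finset.coe_insert, Finset.coe_singleton, Set.mem_insert_iff,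
          Set.mem_singleton_iff]
        tauto
      have hmem4 : s(((2+(m+2)-1 : ℕ) : Fin (m+3)), ((2+(m+2) : ℕ) : Fin (m+3))) ∈
          (↑({s(((0:ℕ) : Fin (m+3)), ((1:ℕ) : Fin (m+3))),
             s(((1:ℕ) : Fin (m+3)), ((2:ℕ) : Fin (m+3)))} : Finset (Sym2 (Fin (m+3)))) :
            Set (Sym2 (Fin (m+3)))) := by
        rw [show (2+(m+2)-1 : ℕ) = m+3 by omega, show (2+(m+2) : ℕ) = m+4 by omega,
          hwrap1, hwrap2]
        simp only [Finset.coe_insert, Finset.coe_singleton, Set.mem_insert_iff,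
          Set.mem_singleton_iff]
        tauto
      have b1 := arc_lb _ f hf 1 1 (by omega) (arc_nbr _ 1 1 (by omega) (by omega) hmem1 hmem2)
      have b2 := arc_lb _ f hf 2 (m+2) (by omega)
        (arc_nbr _ 2 (m+2) (by omega) (by omega) hmem3 hmem4)
      rw [if_neg (by omega)] at b1
      rw [if_neg (by omega)] at b2
      rw [split_sum f 1 (m+2) (by omega)]
      have e2 : (1+1 : ℕ) = 2 := rfl
      rw [e2] at *
      omega
  · -- delete edges {0,1} and {2,3}
    refine ⟨{s(((0:ℕ) : Fin (m+3)), ((1:ℕ) : Fin (m+3))),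
             s(((2:ℕ) : Fin (m+3)), ((3:ℕ) : Fin (m+3)))}, ?_, ?_, ?_⟩
    · intro e he
      simp only [Finset.coe_insert, Finset.coe_singleton, Set.mem_insert_iff,
        Set.mem_singleton_iff] at he
      rcases he with rfl | rfl
      · exact hadj01
      · exact hadj23
    · rw [Finset.card_insert_of_notMem, Finset.card_singleton]
      rw [Finset.mem_singleton, Sym2.eq_iff]
      rintro (⟨h1, h2⟩ | ⟨h1, h2⟩)
      · exact hne02 h1
      · exact hne12 h2
    · apply gammaDR_ge
      intro f hf
      have hmem1 : s(((1-1 : ℕ) : Fin (m+3)), ((1 : ℕ) : Fin (m+3))) ∈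
          (↑({s(((0:ℕ) : Fin (m+3)), ((1:ℕ) : Fin (m+3))),
             s(((2:ℕ) : Fin (m+3)), ((3:ℕ) : Fin (m+3)))} : Finset (Sym2 (Fin (m+3)))) :
            Set (Sym2 (Fin (m+3)))) := by
        simp only [Finset.coe_insert, Finset.coe_singleton, Set.mem_insert_iff,
          Set.mem_singleton_iff]
        tauto
      have hmem2 : s(((1+2-1 : ℕ) : Fin (m+3)), ((1+2 : ℕ) : Fin (m+3))) ∈
          (↑({s(((0:ℕ) : Fin (m+3)), ((1:ℕ) : Fin (m+3))),
             s(((2:ℕ) : Fin (m+3)), ((3:ℕ) : Fin (m+3)))} : Finset (Sym2 (Fin (m+3)))) :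
            Set (Sym2 (Fin (m+3)))) := by
        simp only [Finset.coe_insert, Finset.coe_singleton, Set.mem_insert_iff,
          Set.mem_singleton_iff]
        tauto
      have hmem3 : s(((3-1 : ℕ) : Fin (m+3)), ((3 : ℕ) : Fin (m+3))) ∈
          (↑({s(((0:ℕ) : Fin (m+3)), ((1:ℕ) : Fin (m+3))),
             s(((2:ℕ) : Fin (m+3)), ((3:ℕ) : Fin (m+3)))} : Finset (Sym2 (Fin (m+3)))) :
            Set (Sym2 (Fin (m+3)))) := by
        simp only [Finset.coe_insert, Finset.coe_singleton, Set.mem_insert_iff,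
          Set.mem_singleton_iff]
        tauto
      have hmem4 : s(((3+(m+1)-1 : ℕ) : Fin (m+3)), ((3+(m+1) : ℕ) : Fin (m+3))) ∈
          (↑({s(((0:ℕ) : Fin (m+3)), ((1:ℕ) : Fin (m+3))),
             s(((2:ℕ) : Fin (m+3)), ((3:ℕ) : Fin (m+3)))} : Finset (Sym2 (Fin (m+3)))) :
            Set (Sym2 (Fin (m+3)))) := by
        rw [show (3+(m+1)-1 : ℕ) = m+3 by omega, show (3+(m+1) : ℕ) = m+4 by omega,
          hwrap1, hwrap2]
        simp only [Finset.coe_insert, Finset.coe_singleton, Set.mem_insert_iff,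
          Set.mem_singleton_iff]
        tauto
      have b1 := arc_lb _ f hf 1 2 (by omega) (arc_nbr _ 1 2 (by omega) (by omega) hmem1 hmem2)
      have b2 := arc_lb _ f hf 3 (m+1) (by omega)
        (arc_nbr _ 3 (m+1) (by omega) (by omega) hmem3 hmem4)
      rw [if_neg (by omega)] at b1
      rw [if_neg (by omega)] at b2
      rw [split_sum f 2 (m+1) (by omega)]
      have e2 : (1+2 : ℕ) = 3 := rfl
      rw [e2] at *
      omega

end TwoEdges


/-- For every integer `n ≥ 3` with `n ≢ 2 (mod 6)` and `n ≢ 4 (mod 6)`,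
the double Roman bondage number of the cycle `C_n` equals `2`. -/
theorem cycleGraph_bDR_two (n : ℕ) (hn : 3 ≤ n) (h2 : n % 6 ≠ 2) (h4 : n % 6 ≠ 4) :
    bDR (SimpleGraph.cycleGraph n) = 2 := by
  obtain ⟨m, rfl⟩ : ∃ m, n = m + 3 := ⟨n - 3, by omega⟩
  -- the value of gammaDR on the cycle
  set gv : ℕ := if (m+3) % 3 = 0 then m+3 else m+4 with hgv
  have hgvle : gv ≤ m + 4 := by rw [hgv]; split_ifs <;> omega
  -- lower bound for DRDFs on the cycle
  have hlow : ∀ f, IsDRDF (SimpleGraph.cycleGraph (m+3)) f → gv ≤ ∑ v, f v := by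
    intro f hf
    have h := cycle_lb_main f hf
    rw [hgv]
    split_ifs with h3
    · exact h.1
    · exact h.2 (by omega) h3
  have hgamma_ge : gv ≤ gammaDR (SimpleGraph.cycleGraph (m+3)) :=
    gammaDR_ge _ hlow
  -- upper bound: construction (delete one edge, still a DRDF of the cycle)
  have hgamma_le : gammaDR (SimpleGraph.cycleGraph (m+3)) ≤ gv := by
    obtain ⟨f, hf, hsum⟩ := construction (0 : Fin (m+3))
    have hf' : IsDRDF (SimpleGraph.cycleGraph (m+3)) f :=
      drdf_mono (SimpleGraph.deleteEdges_le _) hf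
    calc gammaDR (SimpleGraph.cycleGraph (m+3)) ≤ ∑ v, f v := gammaDR_le _ hf'
      _ = gv := by rw [hsum, hgv]
  -- membership of 2
  obtain ⟨B2, hB2sub, hB2card, hB2gam⟩ := two_edges (m := m)
  have mem2 : 2 ∈ {k | ∃ B : Finset (Sym2 (Fin (m+3))),
      ↑B ⊆ (SimpleGraph.cycleGraph (m+3)).edgeSet ∧ B.card = k ∧
      gammaDR (SimpleGraph.cycleGraph (m+3)) <
        gammaDR ((SimpleGraph.cycleGraph (m+3)).deleteEdges ↑B)} := by
    exact ⟨B2, hB2sub, hB2card, by omega⟩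
  rw [bDR]
  apply le_antisymm
  · exact Nat.sInf_le mem2
  · apply le_csInf ⟨2, mem2⟩
    rintro k ⟨B, hBsub, rfl, hBlt⟩
    by_contra hk
    push_neg at hk
    interval_cases h : B.card
    · -- no edges removed
      rw [Finset.card_eq_zero] at h
      rw [h] at hBlt
      simp only [Finset.coe_empty, SimpleGraph.deleteEdges_empty] at hBlt
      exact lt_irrefl _ hBlt
    · -- one edge removed
      rw [Finset.card_eq_one] at h
      obtain ⟨e, rfl⟩ := h
      have he : e ∈ (SimpleGraph.cycleGraph (m+3)).edgeSet := by
        apply hBsub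
        simp
      induction e with
      | h a b =>
        rw [SimpleGraph.mem_edgeSet, cycle_adj_iff] at he
        have hsing : ∃ i : Fin (m+3), ({s(a, b)} : Finset (Sym2 (Fin (m+3)))) = {s(i, i+1)} := by
          rcases he with h | h
          · exact ⟨a, by rw [h]⟩
          · refine ⟨b, ?_⟩
            have : a = b + 1 := by rw [h]; ring
            rw [this, Sym2.eq_swap]
        obtain ⟨i, hi⟩ := hsing
        rw [hi] at hBlt
        obtain ⟨f, hf, hsum⟩ := construction i
        have : gammaDR ((SimpleGraph.cycleGraph (m+3)).deleteEdges
            ↑({s(i, i+1)} : Finset (Sym2 (Fin (m+3))))) ≤ gv := by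
          rw [Finset.coe_singleton]
          calc _ ≤ ∑ v, f v := gammaDR_le _ hf
            _ = gv := by rw [hsum, hgv]
        omega
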